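/- arXiv:math/0402407 — 2 statements merged into one kernel-verified Lean document; each statement's English description precedes it below -/
import Mathlib

section
/- If four complex n×n matrices α₁, α₂, α₃, β satisfy αᵢαⱼ + αⱼαᵢ = 2δᵢⱼ·I, αᵢβ + βαᵢ = 0, and β² = I, then the dimension n is even. -/
/-! Taking determinants in `α₀ β = -β α₀` gives `det α₀ det β = (-1)ⁿ det β det α₀`; both
determinants are units since `α₀² = β² = 1`, so `(-1)ⁿ = 1` and `n` is even. -/

theorem Matrix.even_card_of_mul_eq_neg_mul {ι R : Type*} [Fintype ι] [DecidableEq ι] [CommRing R]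
    {A B : Matrix ι ι R} (hA : IsUnit A.det) (hB : IsUnit B.det) (hAB : A * B = -(B * A))
    (hR : (-1 : R) ≠ 1) : Even (Fintype.card ι) := by
  have hdet : (-1) ^ Fintype.card ι * (A.det * B.det) = A.det * B.det := calc
    _ = (-(B * A)).det := by rw [det_neg, det_mul, mul_comm B.det]
    _ = A.det * B.det := by rw [← hAB, det_mul]
  have hsign : (-1 : R) ^ Fintype.card ι = 1 := ((hA.mul hB).mul_eq_right).mp hdet
  exact (neg_one_pow_eq_one_iff_even hR).mp hsign

theorem dirac_dimension_even (n : ℕ) (α : Fin 3 → Matrix (Fin n) (Fin n) ℂ)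
    (β : Matrix (Fin n) (Fin n) ℂ)
    (hαα : ∀ i j, α i * α j + α j * α i = (2 : ℂ) • (if i = j then (1 : Matrix (Fin n) (Fin n) ℂ) else 0))
    (hαβ : ∀ i, α i * β + β * α i = 0)
    (hβ : β * β = 1) : Even n := by
  have hα : α 0 * α 0 = 1 := by
    have h := hαα 0 0
    rw [if_pos rfl, ← two_smul ℂ] at h
    exact smul_right_injective _ two_ne_zero h
  simpa using Matrix.even_card_of_mul_eq_neg_mul (Matrix.isUnit_det_of_right_inverse hα)
    (Matrix.isUnit_det_of_right_inverse hβ) (eq_neg_of_add_eq_zero_left (hαβ 0)) (by norm_num)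
end

section
/- There do not exist 2×2 complex matrices α₁, α₂, α₃, β that pairwise anticommute and each square to the identity. -/
/-!
If `A` and `B` anticommute then `trace (A B) = - trace (B A) = - trace (A B)`, so `trace (A B) = 0`;
if moreover `B² = 1`, then `A B` also anticommutes with `B`, so `trace A = trace (A B B) = 0`.
Hence `1, α₁, α₂, α₃, β` are five vectors that are pairwise orthogonal, and not isotropic, for
the trace form `(A, B) ↦ trace (A B)`. They are therefore linearly independent in the
four-dimensional space of `2 × 2` matrices, which is impossible.
-/

open Matrix

namespace Matrix

section Anticommute

variable {n R : Type*} [Fintype n] [CommRing R] [NoZeroDivisors R] [NeZero (2 : R)]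

theorem trace_mul_eq_zero_of_anticommute {A B : Matrix n n R} (hAB : A * B + B * A = 0) :
    (A * B).trace = 0 := by
  have h : 2 * (A * B).trace = 0 := by
    rw [two_mul, ← trace_add, ← trace_zero n R, ← hAB, trace_add, trace_add, trace_mul_comm B A]
  exact (mul_eq_zero.1 h).resolve_left two_ne_zero

theorem trace_eq_zero_of_anticommute [DecidableEq n] {A B : Matrix n n R}
    (hAB : A * B + B * A = 0) (hB : B * B = 1) : A.trace = 0 := by
  have hABB : A * B * B + B * (A * B) = 0 := by
    rw [← Matrix.mul_assoc, eq_neg_of_add_eq_zero_right hAB, neg_mul, add_neg_cancel]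
  simpa [Matrix.mul_assoc, hB] using trace_mul_eq_zero_of_anticommute hABB

end Anticommute

variable {n K : Type*} [Fintype n] [DecidableEq n] [Field K]

noncomputable def traceMulForm : LinearMap.BilinForm K (Matrix n n K) :=
  (LinearMap.mul K (Matrix n n K)).compr₂ (traceLinearMap n K K)

@[simp]
theorem traceMulForm_apply (A B : Matrix n n K) : traceMulForm A B = (A * B).trace :=
  rfl

theorem linearIndependent_one_and_anticommuting_involutions [NeZero (2 : K)] {ι : Type*}
    [Nontrivial ι] (M : ι → Matrix n n K) (hanti : Pairwise fun i j => M i * M j + M j * M i = 0)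
    (hsq : ∀ i, M i * M i = 1) (hcard : (Fintype.card n : K) ≠ 0) :
    LinearIndependent K (Option.elim' 1 M) := by
  have htrace (i : ι) : (M i).trace = 0 := by
    obtain ⟨j, hji⟩ := exists_ne i
    exact trace_eq_zero_of_anticommute (hanti hji.symm) (hsq j)
  refine LinearMap.BilinForm.linearIndependent_of_iIsOrtho (B := traceMulForm) ?_ ?_
  · rintro (_ | i) (_ | j) hij
    · exact absurd rfl hij
    · simp [Function.onFun, htrace]
    · simp [Function.onFun, htrace]
    · exact trace_mul_eq_zero_of_anticommute (hanti fun h => hij (congrArg some h))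
  · rintro (_ | i) <;> simp [hsq, hcard]

end Matrix

theorem no_four_anticommuting_two_by_two :
    ¬ ∃ M : Fin 4 → Matrix (Fin 2) (Fin 2) ℂ,
      (∀ i j, i ≠ j → M i * M j + M j * M i = 0) ∧ (∀ i, M i * M i = 1) := by
  rintro ⟨M, hanti, hsq⟩
  have hM := linearIndependent_one_and_anticommuting_involutions M hanti hsq (by norm_num)
  simpa [Module.finrank_matrix] using hM.fintype_card_le_finrank
end
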